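/- arXiv:1503.03992 — 5 statements merged into one kernel-verified Lean document; each statement's English description precedes it below -/
import Mathlib

section
/- Let R → S be a ring morphism such that S is a free R-module of finite rank with an R-linear map λ: S → R generating Hom_R(S,R) as an S-module, and let (e_i), (f_j) be dual R-bases satisfying λ(e_i f_j) = δ_ij. Then the element Σ_i e_i ⊗ f_i is central in the S-bimodule S ⊗_R S, i.e. for all a ∈ S, Σ_i (a·e_i) ⊗ f_i = Σ_i e_i ⊗ (f_i·a). -/
open scoped TensorProduct

/-!
Duality `λ(e_i f_j) = δ_ij` gives the expansions `x = Σ_j λ(x f_j) e_j` and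
`y = Σ_i λ(e_i y) f_i`. Expanding `a e_i` in the first and `f_j a` in the second, both sides of
the identity become `Σ_{i,j} λ(a e_i f_j) e_j ⊗ f_i`.
-/

namespace Module.Basis

variable {R S ι : Type*} [CommSemiring R] [Semiring S] [Algebra R S] [DecidableEq ι]

theorem coord_eq_comp_mulRight (b : Basis ι R S) (lam : S →ₗ[R] R) {f : ι → S}
    (hdual : ∀ i j, lam (b i * f j) = if i = j then 1 else 0) (j : ι) :
    b.coord j = lam ∘ₗ LinearMap.mulRight R (f j) := by
  refine b.ext fun i => ?_
  simp [hdual, Finsupp.single_apply, eq_comm]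

theorem sum_dual_smul_eq [Fintype ι] (b : Basis ι R S) (lam : S →ₗ[R] R) {f : ι → S}
    (hdual : ∀ i j, lam (b i * f j) = if i = j then 1 else 0) (x : S) :
    ∑ j, lam (x * f j) • b j = x := by
  conv_rhs => rw [← b.sum_repr x]
  refine Finset.sum_congr rfl fun j _ => ?_
  rw [← b.coord_apply, b.coord_eq_comp_mulRight lam hdual]
  rfl

end Module.Basis

theorem sum_mul_tmul_eq_sum_tmul_mul {R S ι : Type*} [CommSemiring R] [CommSemiring S]
    [Algebra R S] [Fintype ι] (lam : S →ₗ[R] R) (e f : ι → S)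
    (he : ∀ x, ∑ j, lam (x * f j) • e j = x) (hf : ∀ y, ∑ i, lam (e i * y) • f i = y)
    (a : S) :
    ∑ i, (a * e i) ⊗ₜ[R] f i = ∑ i, e i ⊗ₜ[R] (f i * a) := by
  calc ∑ i, (a * e i) ⊗ₜ[R] f i
      = ∑ i, ∑ j, lam (a * e i * f j) • (e j ⊗ₜ[R] f i) := by
        conv_lhs => enter [2, i]; rw [← he (a * e i)]
        simp only [TensorProduct.sum_tmul, TensorProduct.smul_tmul']
    _ = ∑ j, ∑ i, lam (e i * (f j * a)) • (e j ⊗ₜ[R] f i) := by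
        rw [Finset.sum_comm]
        refine Finset.sum_congr rfl fun j _ => Finset.sum_congr rfl fun i _ => ?_
        ring_nf
    _ = ∑ j, e j ⊗ₜ[R] (f j * a) := by
        conv_rhs => enter [2, j]; rw [← hf (f j * a)]
        simp only [TensorProduct.tmul_sum, TensorProduct.tmul_smul]

theorem stmt0_general {R S : Type*} [CommRing R] [CommRing S] [Algebra R S]
    {n : ℕ}
    (lam : S →ₗ[R] R)
    (e f : Fin n → S)
    (he : ∃ be : Module.Basis (Fin n) R S, ∀ i, be i = e i)
    (hf : ∃ bf : Module.Basis (Fin n) R S, ∀ i, bf i = f i)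
    (hdual : ∀ i j, lam (e i * f j) = if i = j then (1 : R) else 0)
    (a : S) :
    ∑ i, (a * e i) ⊗ₜ[R] f i = ∑ i, e i ⊗ₜ[R] (f i * a) := by
  obtain ⟨be, rfl⟩ : ∃ be : Module.Basis (Fin n) R S, ⇑be = e := he.imp fun _ h => funext h
  obtain ⟨bf, rfl⟩ : ∃ bf : Module.Basis (Fin n) R S, ⇑bf = f := hf.imp fun _ h => funext h
  have hdual' : ∀ i j, lam (bf i * be j) = if i = j then 1 else 0 := fun i j => by
    rw [mul_comm, hdual]
    simp only [eq_comm]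
  refine sum_mul_tmul_eq_sum_tmul_mul lam be bf (be.sum_dual_smul_eq lam hdual) (fun y => ?_) a
  simpa only [mul_comm] using bf.sum_dual_smul_eq lam hdual' y

/-- **Centrality of the Casimir element.**
Let `R → S` be a ring morphism such that `S` is a free `R`-module of finite rank, with an
`R`-linear map `λ : S → R` generating `Hom_R(S, R)` as an `S`-module, and let `(e_i)`, `(f_j)`
be dual `R`-bases satisfying `λ (e_i * f_j) = δ_{ij}`.  Then `Σ_i e_i ⊗ f_i` is central in the
`S`-bimodule `S ⊗_R S`: for every `a ∈ S`, `Σ_i (a * e_i) ⊗ f_i = Σ_i e_i ⊗ (f_i * a)`. -/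
theorem stmt0 {R S : Type*} [CommRing R] [CommRing S] [Algebra R S]
    {n : ℕ} (b : Module.Basis (Fin n) R S)
    (lam : S →ₗ[R] R)
    (hgen : ∀ φ : S →ₗ[R] R, ∃ s : S, ∀ x : S, φ x = lam (s * x))
    (e f : Fin n → S)
    (he : ∃ be : Module.Basis (Fin n) R S, ∀ i, be i = e i)
    (hf : ∃ bf : Module.Basis (Fin n) R S, ∀ i, bf i = f i)
    (hdual : ∀ i j, lam (e i * f j) = if i = j then (1 : R) else 0)
    (a : S) :
    ∑ i, (a * e i) ⊗ₜ[R] f i = ∑ i, e i ⊗ₜ[R] (f i * a) :=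
  stmt0_general lam e f he hf hdual a
end

section
/- Let h: W → Y be a finite morphism of schemes of finite type over a field k, and let F be a coherent sheaf on W whose scheme-theoretic support is all of W. If the pushforward h_* F is an invertible O_Y-module (locally free of rank one), then h is an isomorphism and F is a line bundle on W. -/
/-!
Faithfulness embeds `S` into `End_R(F)` as an `R`-subalgebra. Since `F` is locally free of
rank one, `R → End_R(F)` is an isomorphism (this can be checked after localizing at maximal
ideals, where it is the statement `End(R_P) = R_P`), so `R → S` is bijective. Once `R ≅ S`,
being finite, projective and locally of rank one over `S` is the same as over `R`.
-/

theorem Module.bijective_algebraMap_end_of_linearEquiv {A M : Type*} [CommRing A]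
    [AddCommGroup M] [Module A M] (e : M ≃ₗ[A] A) :
    Function.Bijective (algebraMap A (Module.End A M)) := by
  have : Module.Invertible A M := .congr e.symm
  convert Module.Invertible.toModuleEnd_bijective A M
  ext a m
  simp

theorem Module.bijective_algebraMap_end_of_localizedModule_equiv {R F : Type*} [CommRing R]
    [AddCommGroup F] [Module R F] [Module.FinitePresentation R F]
    (hloc : ∀ (P : Ideal R) [P.IsMaximal],
      Nonempty (LocalizedModule P.primeCompl F ≃ₗ[Localization.AtPrime P]
        Localization.AtPrime P)) :
    Function.Bijective (algebraMap R (Module.End R F)) := by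
  refine bijective_of_isLocalized_maximal (fun P _ ↦ Localization.AtPrime P)
    (fun P _ ↦ Algebra.linearMap R _) _ (fun P _ ↦ LocalizedModule.map P.primeCompl)
    (Algebra.linearMap R (Module.End R F)) fun P _ ↦ ?_
  have hmap : IsLocalizedModule.map P.primeCompl (Algebra.linearMap R _)
      (LocalizedModule.map P.primeCompl) (Algebra.linearMap R (Module.End R F)) =
      (Algebra.linearMap (Localization.AtPrime P) (Module.End (Localization.AtPrime P)
        (LocalizedModule P.primeCompl F))).restrictScalars R := by
    apply IsLocalizedModule.linearMap_ext P.primeCompl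
      (Algebra.linearMap R (Localization.AtPrime P))
      (LocalizedModule.map (M := F) (N := F) P.primeCompl)
    ext x
    rw [LinearMap.comp_apply, IsLocalizedModule.map_apply]
    simp [Module.End.one_eq_id]
  rw [hmap]
  exact bijective_algebraMap_end_of_linearEquiv (hloc P).some

section BijectiveAlgebraMap

variable {R S : Type*} [CommRing R] [CommRing S] [Algebra R S]

theorem bijective_algebraMap_of_injective_algHom {A : Type*} [Semiring A] [Algebra R A]
    (φ : S →ₐ[R] A) (hφ : Function.Injective φ) (hA : Function.Bijective (algebraMap R A)) :
    Function.Bijective (algebraMap R S) := by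
  refine ⟨fun a b hab ↦ hA.injective ?_, fun s ↦ ?_⟩
  · rw [← φ.commutes, ← φ.commutes, hab]
  · obtain ⟨r, hr⟩ := hA.surjective (φ s)
    exact ⟨r, hφ (by rw [φ.commutes, hr])⟩

variable {F : Type*} [AddCommGroup F] [Module R F] [Module S F] [IsScalarTower R S F]

theorem Module.Projective.of_bijective_algebraMap (h : Function.Bijective (algebraMap R S))
    [Module.Projective R F] : Module.Projective S F :=
  let e := RingEquiv.ofBijective (algebraMap R S) h
  have : RingHomInvPair (e : R →+* S) (e.symm : S →+* R) := .of_ringEquiv e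
  have : RingHomInvPair (e.symm : S →+* R) (e : R →+* S) := .symm _ _
  .of_equiv (σ := (e : R →+* S)) (σ' := (e.symm : S →+* R))
    { AddEquiv.refl F with map_smul' := fun r x ↦ (algebraMap_smul S r x).symm }

theorem nonempty_localizedModule_atPrime_equiv_of_bijective
    (h : Function.Bijective (algebraMap R S))
    (hloc : ∀ (p : Ideal R) (_ : p.IsPrime),
      Nonempty (LocalizedModule p.primeCompl F ≃ₗ[Localization.AtPrime p]
        Localization.AtPrime p))
    (q : Ideal S) [q.IsPrime] :
    Nonempty (LocalizedModule q.primeCompl F ≃ₗ[Localization.AtPrime q]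
      Localization.AtPrime q) := by
  set p := q.under R
  have hp : Algebra.algebraMapSubmonoid S p.primeCompl = q.primeCompl :=
    Ideal.algebraMapSubmonoid_primeCompl_of_liesOver_surjective q p h.surjective
  have : IsLocalizedModule p.primeCompl
      ((LocalizedModule.mkLinearMap q.primeCompl F).restrictScalars R) := by
    have : IsLocalizedModule (Algebra.algebraMapSubmonoid S p.primeCompl)
        (LocalizedModule.mkLinearMap q.primeCompl F) := by rw [hp]; infer_instance
    exact IsLocalizedModule.restrictScalars _ _
  have : IsLocalizedModule p.primeCompl
      ((Algebra.linearMap S (Localization.AtPrime q)).restrictScalars R) := by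
    have : IsLocalizedModule (Algebra.algebraMapSubmonoid S p.primeCompl)
        (Algebra.linearMap S (Localization.AtPrime q)) := by rw [hp]; infer_instance
    exact IsLocalizedModule.restrictScalars _ _
  -- As `R`-modules, `F_q ≃ F_p ≃ R_p ≃ S_q`; an `R`-linear map is `S`- and then `S_q`-linear.
  let e : R ≃ₗ[R] S := .ofBijective (Algebra.linearMap R S) h
  let eF := IsLocalizedModule.linearEquiv p.primeCompl
    ((LocalizedModule.mkLinearMap q.primeCompl F).restrictScalars R)
    (LocalizedModule.mkLinearMap p.primeCompl F)
  let eR := IsLocalizedModule.linearEquiv p.primeCompl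
    (Algebra.linearMap R (Localization.AtPrime p))
    ((Algebra.linearMap S (Localization.AtPrime q)).restrictScalars R ∘ₗ e.toLinearMap)
  let eFR := (hloc p inferInstance).some.restrictScalars R
  exact ⟨((eF ≪≫ₗ eFR ≪≫ₗ eR).extendScalarsOfSurjective h.surjective)
    |>.extendScalarsOfIsLocalization q.primeCompl _⟩

end BijectiveAlgebraMap

theorem stmt1_general {R S F : Type*} [CommRing R] [CommRing S] [Algebra R S]
    [AddCommGroup F] [Module R F] [Module S F] [IsScalarTower R S F]
    (hfaithful : ∀ s : S, (∀ x : F, s • x = 0) → s = 0)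
    (hfinF : Module.Finite R F) (hprojF : Module.Projective R F)
    (hrankF : ∀ (p : Ideal R) (_ : p.IsPrime),
      Nonempty (LocalizedModule p.primeCompl F ≃ₗ[Localization.AtPrime p]
        Localization.AtPrime p)) :
    Function.Bijective (algebraMap R S) ∧
      Module.Finite S F ∧ Module.Projective S F ∧
      ∀ (q : Ideal S) (_ : q.IsPrime),
        Nonempty (LocalizedModule q.primeCompl F ≃ₗ[Localization.AtPrime q]
          Localization.AtPrime q) := by
  have : Module.FinitePresentation R F := Module.finitePresentation_of_projective R F
  have hlsmul : Function.Injective (Algebra.lsmul R R F : S →ₐ[R] Module.End R F) :=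
    (injective_iff_map_eq_zero _).mpr fun s hs ↦ hfaithful s (LinearMap.congr_fun hs)
  have hbij : Function.Bijective (algebraMap R S) :=
    bijective_algebraMap_of_injective_algHom _ hlsmul
      (Module.bijective_algebraMap_end_of_localizedModule_equiv fun P _ ↦ hrankF P inferInstance)
  exact ⟨hbij, .of_restrictScalars_finite R S F, .of_bijective_algebraMap hbij,
    fun q _ ↦ nonempty_localizedModule_atPrime_equiv_of_bijective hbij hrankF q⟩

/-- **(Affine form of) triviality of finite maps with invertible pushforward.**
If `R → S` is a ring map making `S` module-finite over `R` (the affine incarnation of a finite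
morphism `h : W → Y` of schemes of finite type over a field), and `F` is an `S`-module which is
faithful over `S` (its scheme-theoretic support is all of `W`) and which is invertible as an
`R`-module (i.e. `h_* F` is locally free of rank one), then `R → S` is an isomorphism and `F`
is invertible over `S` (a line bundle on `W`). -/
theorem stmt1 {R S F : Type*} [CommRing R] [CommRing S] [Algebra R S]
    [AddCommGroup F] [Module R F] [Module S F] [IsScalarTower R S F]
    (hfin : Module.Finite R S)
    (hfaithful : ∀ s : S, (∀ x : F, s • x = 0) → s = 0)
    (hfinF : Module.Finite R F) (hprojF : Module.Projective R F)
    (hrankF : ∀ (p : Ideal R) (_ : p.IsPrime),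
      Nonempty (LocalizedModule p.primeCompl F ≃ₗ[Localization.AtPrime p]
        Localization.AtPrime p)) :
    Function.Bijective (algebraMap R S) ∧
      Module.Finite S F ∧ Module.Projective S F ∧
      ∀ (q : Ideal S) (_ : q.IsPrime),
        Nonempty (LocalizedModule q.primeCompl F ≃ₗ[Localization.AtPrime q]
          Localization.AtPrime q) :=
  stmt1_general hfaithful hfinF hprojF hrankF
end

section
/- Let f: Y → X be a finite morphism of noetherian integral schemes, L a line bundle on Y, and p ∈ X a point. Then there exists an open subset U ⊆ X containing p such that the restriction of L to f^{-1}(U) is trivial, i.e. isomorphic to O_{f^{-1}(U)}. -/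
/-!
Let `T` be the image of `R \ p` in `S`. The ring `S_T` is finite over the local ring `R_p`, so
it has only finitely many maximal ideals, and `L_T` is finite flat of rank one at each of them;
over a semilocal ring this forces `L_T ≅ S_T`. As `L` is finitely presented, a basis of `L_T`
is already defined over `S_r` for a single `r ∈ T`, the image of some `z ∉ p`.
-/

open Module TensorProduct

namespace Module

variable {R M : Type*} [CommRing R] [AddCommGroup M] [Module R M] [Module.Finite R M] [Flat R M]

theorem finrank_quotient_tensorProduct_eq_rankAtStalk (P : Ideal R) [P.IsMaximal] :
    finrank (R ⧸ P) ((R ⧸ P) ⊗[R] M) = rankAtStalk M ⟨P, inferInstance⟩ := by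
  let := Ideal.Quotient.field P
  rw [rankAtStalk_eq, ← finrank_baseChange (R := P.ResidueField),
    (AlgebraTensorModule.cancelBaseChange R (R ⧸ P) P.ResidueField P.ResidueField M).finrank_eq]

theorem nonempty_basis_of_flat_of_rankAtStalk_eq [Finite (MaximalSpectrum R)]
    (n : ℕ) (h : ∀ P : MaximalSpectrum R, rankAtStalk M P.toPrimeSpectrum = n) :
    Nonempty (Basis (Fin n) R M) :=
  nonempty_basis_of_flat_of_finrank_eq R M n fun P ↦
    (finrank_quotient_tensorProduct_eq_rankAtStalk P.1).trans (h P)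

end Module

theorem finite_maximalSpectrum_of_isLocalRing (R S : Type*) [CommRing R] [IsLocalRing R]
    [CommRing S] [Algebra R S] [Module.Finite R S] : Finite (MaximalSpectrum S) := by
  have := (Algebra.QuasiFinite.finite_primesOver (S := S) (IsLocalRing.maximalIdeal R)).to_subtype
  refine Finite.of_injective (β := (IsLocalRing.maximalIdeal R).primesOver S)
    (fun P ↦ ⟨P.1, P.2.isPrime, ⟨?_⟩⟩) fun P Q h ↦ MaximalSpectrum.ext (congrArg Subtype.val h)
  have := P.2
  exact (IsLocalRing.eq_maximalIdeal (Ideal.isMaximal_comap_of_isIntegral_of_isMaximal P.1)).symm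

theorem finite_maximalSpectrum_localization_algebraMapSubmonoid {R : Type*} (S : Type*)
    [CommRing R] [CommRing S] [Algebra R S] [Module.Finite R S] (p : Ideal R) [p.IsPrime] :
    Finite (MaximalSpectrum (Localization (Algebra.algebraMapSubmonoid S p.primeCompl))) := by
  have : Module.Finite (Localization.AtPrime p)
      (Localization (Algebra.algebraMapSubmonoid S p.primeCompl)) :=
    Module.Finite.of_isLocalization R S p.primeCompl
  exact finite_maximalSpectrum_of_isLocalRing (Localization.AtPrime p) _

theorem stmt3_general {R S L : Type*} [CommRing R] [CommRing S] [Algebra R S]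
    [Module.Finite R S]
    [AddCommGroup L] [Module S L] [Module.Finite S L] [Module.Projective S L]
    (hinv : ∀ (q : Ideal S) (_ : q.IsPrime),
      Nonempty (LocalizedModule q.primeCompl L ≃ₗ[Localization.AtPrime q]
        Localization.AtPrime q))
    (p : Ideal R) (hp : p.IsPrime) :
    ∃ z : R, z ∉ p ∧
      Nonempty (LocalizedModule (Submonoid.powers (algebraMap R S z)) L
        ≃ₗ[Localization (Submonoid.powers (algebraMap R S z))]
        Localization (Submonoid.powers (algebraMap R S z))) := by
  let T := Algebra.algebraMapSubmonoid S p.primeCompl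
  have : Module.FinitePresentation S L := Module.finitePresentation_of_projective S L
  have := finite_maximalSpectrum_localization_algebraMapSubmonoid S p
  have hrank (q : PrimeSpectrum S) : rankAtStalk L q = 1 :=
    (hinv q.1 q.2).some.finrank_eq.trans (finrank_self _)
  obtain ⟨b⟩ := nonempty_basis_of_flat_of_rankAtStalk_eq (M := LocalizedModule T L) 1 fun P ↦
    (rankAtStalk_isBaseChange (LocalizedModule.isBaseChange T L) _).trans (hrank _)
  obtain ⟨_, ⟨z, hz, rfl⟩, b', -⟩ := Module.FinitePresentation.exists_basis_localizedModule_powers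
    T (LocalizedModule.mkLinearMap T L) (Localization T) b
  exact ⟨z, hz, ⟨b'.equivFun ≪≫ₗ LinearEquiv.funUnique (Fin 1) _ _⟩⟩

/-- **(Affine form of) local triviality of a line bundle along a finite morphism.**
Let `R` be noetherian, `S` a module-finite `R`-algebra (the affine incarnation of a finite
morphism `f : Y → X` of noetherian integral schemes), `L` an invertible `S`-module
(a line bundle on `Y`), and `p` a prime of `R` (a point of `X`).  Then there exists
`z ∈ R \ p` (so that `Spec R_z` is an open neighbourhood of `p`) such that the localization
of `L` at the powers of the image of `z` in `S` (i.e. `L|_{f⁻¹(U)}`) is a free module of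
rank one (i.e. trivial) over the corresponding localization of `S`. -/
theorem stmt3 {R S L : Type*} [CommRing R] [IsNoetherianRing R] [CommRing S] [Algebra R S]
    [Module.Finite R S]
    [AddCommGroup L] [Module S L] [Module.Finite S L] [Module.Projective S L]
    (hinv : ∀ (q : Ideal S) (_ : q.IsPrime),
      Nonempty (LocalizedModule q.primeCompl L ≃ₗ[Localization.AtPrime q]
        Localization.AtPrime q))
    (p : Ideal R) (hp : p.IsPrime) :
    ∃ z : R, z ∉ p ∧
      Nonempty (LocalizedModule (Submonoid.powers (algebraMap R S z)) L
        ≃ₗ[Localization (Submonoid.powers (algebraMap R S z))]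
        Localization (Submonoid.powers (algebraMap R S z))) :=
  stmt3_general hinv p hp
end

section
/- Let A be a d-periodic Z-algebra over a sequence of commutative rings (R_i) with R_{i+d} = R_i, and let R = ⊕_{i=0}^{d-1} R_i. Define the graded R-module Ā = ⊕_n Ā_n where Ā_n is the d×d matrix with (i,j)-entry A_{i,i+n} if j − i ≡ n (mod d) and 0 otherwise. Then matrix multiplication (using the periodicity isomorphisms) makes Ā an associative unital graded R-algebra, with unit the diagonal matrix of the units e_i ∈ A_{i,i}. -/
/-!
A `d`-periodic ℤ-algebra `A` over a sequence of commutative rings `(R_i)` with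
`R_{i+d} = R_i` is encoded with the periodicity built into the indexing: the rings are
indexed by residues `i : ZMod d`, and `B i n` plays the role of the component `A_{a, a+n}`
for any integer `a` with residue `i` (this is equivalent data to a `d`-periodic ℤ-algebra,
the periodicity isomorphisms becoming identities).  Since type indices such as
`i + ((m + n : ℤ) : ZMod d)` and `i + (m : ZMod d) + (n : ZMod d)` are only propositionally
equal, equalities between elements of propositionally equal components are expressed with
`HEq` and the cast `bcast`.
-/

/-- Transport along an equality of residues. -/
def bcast {d : ℕ} {B : ZMod d → ℤ → Type*} {i j : ZMod d} {n : ℤ}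
    (h : i = j) (x : B i n) : B j n := h ▸ x

/-- The degree-`n` component `Ā_n = ⊕_{i=0}^{d-1} A_{i,i+n}` of the graded algebra `Ā`
associated to a `d`-periodic ℤ-algebra: a `d × d`-matrix whose `(i,j)`-entry is
`A_{i,i+n}` when `j - i ≡ n (mod d)` and `0` otherwise, i.e. exactly one nonzero entry in
each row. -/
abbrev MatC {d : ℕ} (B : ZMod d → ℤ → Type*) (n : ℤ) : Type _ := ∀ i : ZMod d, B i n

/-- Matrix multiplication on the components of `Ā`. -/
def matMul {d : ℕ} {B : ZMod d → ℤ → Type*}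
    (mul : ∀ ⦃i : ZMod d⦄ ⦃m n : ℤ⦄, B i m → B (i + (m : ZMod d)) n → B i (m + n))
    {m n : ℤ} (x : MatC B m) (y : MatC B n) : MatC B (m + n) :=
  fun i => mul (x i) (y (i + (m : ZMod d)))

/-- The identity matrix, whose diagonal entries are the units `e_i ∈ A_{i,i}`. -/
def matOne {d : ℕ} {B : ZMod d → ℤ → Type*} (one : ∀ i, B i 0) : MatC B 0 :=
  fun i => one i


lemma bcast_apply {d : ℕ} {B : ZMod d → ℤ → Type*} {n : ℤ}
    (z : ∀ j : ZMod d, B j n) {i j : ZMod d} (h : i = j) : bcast h (z i) = z j := by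
  subst h; rfl

lemma matc_heq {d : ℕ} {B : ZMod d → ℤ → Type*} {m p : ℤ} (h : m = p)
    {x : MatC B m} {y : MatC B p} (hx : ∀ i, HEq (x i) (y i)) : HEq x y := by
  subst h
  exact heq_of_eq (funext fun i => eq_of_heq (hx i))

/-- **(Lemma 3.9.)** If `A` is a `d`-periodic ℤ-algebra over the rings `(R_i)` then matrix
multiplication (using the periodicity isomorphisms) makes `Ā = ⊕_n Ā_n` an associative
unital graded algebra over `R = ⊕_{i=0}^{d-1} R_i`, with unit the diagonal matrix of the
units `e_i ∈ A_{i,i}`: the matrix product is biadditive and compatible with the `R`-action,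
associative, and unital. -/
theorem stmt8 {d : ℕ} [NeZero d]
    (R : ZMod d → Type*) [∀ i, CommRing (R i)]
    (B : ZMod d → ℤ → Type*) [∀ i n, AddCommGroup (B i n)]
    [∀ i n, Module (R i) (B i n)]
    (mul : ∀ ⦃i : ZMod d⦄ ⦃m n : ℤ⦄, B i m → B (i + (m : ZMod d)) n → B i (m + n))
    (one : ∀ i, B i 0)
    (hmul_addl : ∀ ⦃i : ZMod d⦄ ⦃m n : ℤ⦄ (x y : B i m) (z : B (i + (m : ZMod d)) n),
      mul (x + y) z = mul x z + mul y z)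
    (hmul_addr : ∀ ⦃i : ZMod d⦄ ⦃m n : ℤ⦄ (x : B i m) (y z : B (i + (m : ZMod d)) n),
      mul x (y + z) = mul x y + mul x z)
    (hmul_smul : ∀ ⦃i : ZMod d⦄ ⦃m n : ℤ⦄ (r : R i) (x : B i m)
      (z : B (i + (m : ZMod d)) n), mul (r • x) z = r • mul x z)
    (hassoc : ∀ ⦃i : ZMod d⦄ ⦃m n p : ℤ⦄ (x : B i m) (y : B (i + (m : ZMod d)) n)
      (z : B (i + ((m + n : ℤ) : ZMod d)) p),
      HEq (mul (mul x y) z) (mul x (mul y (bcast (by push_cast; ring) z))))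
    (hone_mul : ∀ ⦃i : ZMod d⦄ ⦃n : ℤ⦄ (x : B i n),
      HEq (mul (one i) (bcast (by simp) x)) x)
    (hmul_one : ∀ ⦃i : ZMod d⦄ ⦃n : ℤ⦄ (x : B i n),
      HEq (mul x (one (i + (n : ZMod d)))) x) :
    (∀ (m n : ℤ) (x x' : MatC B m) (y : MatC B n),
        matMul mul (x + x') y = matMul mul x y + matMul mul x' y) ∧
    (∀ (m n : ℤ) (x : MatC B m) (y y' : MatC B n),
        matMul mul x (y + y') = matMul mul x y + matMul mul x y') ∧
    (∀ (m n : ℤ) (r : ∀ i, R i) (x : MatC B m) (y : MatC B n),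
        matMul mul (fun i => r i • x i) y = fun i => r i • matMul mul x y i) ∧
    (∀ (m n p : ℤ) (x : MatC B m) (y : MatC B n) (z : MatC B p),
        HEq (matMul mul (matMul mul x y) z) (matMul mul x (matMul mul y z))) ∧
    (∀ (n : ℤ) (x : MatC B n), HEq (matMul mul (matOne one) x) x) ∧
    (∀ (n : ℤ) (x : MatC B n), HEq (matMul mul x (matOne one)) x) := by
  refine ⟨?_, ?_, ?_, ?_, ?_, ?_⟩
  · intro m n x x' y; funext i; exact hmul_addl _ _ _
  · intro m n x y y'; funext i; exact hmul_addr _ _ _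
  · intro m n r x y; funext i; exact hmul_smul _ _ _
  · intro m n p x y z
    apply matc_heq (add_assoc m n p)
    intro i
    have h := hassoc (x i) (y (i + (m : ZMod d))) (z (i + ((m + n : ℤ) : ZMod d)))
    rwa [bcast_apply z (by push_cast; ring)] at h
  · intro n x
    apply matc_heq (zero_add n)
    intro i
    have h := hone_mul (x i)
    rwa [bcast_apply x (by simp)] at h
  · intro n x
    apply matc_heq (add_zero n)
    intro i
    exact hmul_one (x i)
end

section
/- Let R → S be a relative Frobenius ring extension of rank n (S free of rank n over R, Hom_R(S,R) ≅ S as S-modules, with generator λ and dual bases (e_i), (f_i)). The map φ₁: Hom_R(M ⊗_S S_R, N) → Hom_S(M, N ⊗_R S), ψ ↦ (m ↦ Σ_i ψ(m e_i) ⊗ f_i), is a well-defined bijection exhibiting the restriction functor (−)_R as left adjoint to (−) ⊗_R S on module categories; in particular its value on the identity of S is 1 ↦ Σ_i e_i ⊗ f_i. -/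
open scoped TensorProduct

/-!
Because `S` is free of rank `n`, the biorthogonality `λ(e_i f_j) = δ_ij` already makes `(e_i)` and
`(f_i)` dual bases: `x = Σ λ(e_i x) f_i = Σ λ(f_i x) e_i`. Consequently `Σ e_i ⊗ f_i` is central
in `S ⊗_R S`, which is exactly what makes `m ↦ Σ e_i ⊗ ψ(f_i m)` `S`-linear. The inverse
correspondence is `g ↦ (λ ⊗ id) ∘ g`, and the two are mutually inverse by the same expansions.
-/

theorem Module.Basis.sum_smul_eq_self_of_biorthogonal {R V : Type*} [CommRing R]
    [AddCommGroup V] [Module R V] {n : ℕ} (b : Module.Basis (Fin n) R V)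
    (ε : Fin n → V →ₗ[R] R) (v : Fin n → V) (h : ∀ i j, ε i (v j) = if i = j then 1 else 0)
    (x : V) : ∑ i, ε i x • v i = x := by
  set G := LinearMap.pi ε
  set F := Fintype.linearCombination R v
  have hGF : ∀ c, G (F c) = c := fun c => by
    ext i
    simp [G, F, Fintype.linearCombination_apply, h]
  have hG : Function.Injective G :=
    OrzechProperty.injective_of_surjective_of_injective b.equivFun.toLinearMap G
      b.equivFun.injective fun c => ⟨F c, hGF c⟩
  simpa [F, G, Fintype.linearCombination_apply] using hG (hGF (G x))

namespace FrobeniusExtension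

variable {R S : Type*} [CommRing R] [CommRing S] [Algebra R S] (lam : S →ₗ[R] R)
  (N : Type*) [AddCommGroup N] [Module R N]

noncomputable def counit : S ⊗[R] N →ₗ[R] N :=
  TensorProduct.lid R N ∘ₗ lam.rTensor N

variable {lam N}

@[simp]
theorem counit_tmul (s : S) (x : N) : counit lam N (s ⊗ₜ x) = lam s • x := rfl

variable {n : ℕ} (b : Module.Basis (Fin n) R S) {e f : Fin n → S}
  (hdual : ∀ i j, lam (e i * f j) = if i = j then (1 : R) else 0)
include b hdual

theorem sum_lam_mul_smul (x : S) : ∑ i, lam (e i * x) • f i = x :=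
  b.sum_smul_eq_self_of_biorthogonal (fun i => lam ∘ₗ LinearMap.mulLeft R (e i)) f hdual x

theorem sum_lam_mul_smul' (x : S) : ∑ i, lam (f i * x) • e i = x :=
  sum_lam_mul_smul b (fun i j => by rw [mul_comm, hdual]; exact if_congr eq_comm rfl rfl) x

theorem sum_mul_tmul_eq_sum_tmul_mul (s : S) :
    ∑ i, (s * e i) ⊗ₜ[R] f i = ∑ i, e i ⊗ₜ[R] (f i * s) := by
  conv_lhs => enter [2, i]; rw [← sum_lam_mul_smul' b hdual (s * e i), TensorProduct.sum_tmul]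
  conv_rhs => enter [2, i]; rw [← sum_lam_mul_smul b hdual (f i * s), TensorProduct.tmul_sum]
  rw [Finset.sum_comm]
  refine Finset.sum_congr rfl fun i _ => Finset.sum_congr rfl fun j _ => ?_
  rw [TensorProduct.smul_tmul]
  congr 3
  ring

variable {M : Type*} [AddCommGroup M] [Module R M] [Module S M] [IsScalarTower R S M]

theorem exists_linearMap_eq_sum_tmul (ψ : M →ₗ[R] N) :
    ∃ g : M →ₗ[S] S ⊗[R] N, ∀ m, g m = ∑ i, e i ⊗ₜ[R] ψ (f i • m) := by
  refine ⟨{ toFun m := ∑ i, e i ⊗ₜ[R] ψ (f i • m), map_add' := ?_, map_smul' := ?_ },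
    fun _ => rfl⟩
  · intro m m'
    simp only [smul_add, map_add, TensorProduct.tmul_add, Finset.sum_add_distrib]
  · intro s m
    let Φ : S ⊗[R] S →ₗ[R] S ⊗[R] N := TensorProduct.map LinearMap.id
      (ψ ∘ₗ (LinearMap.toSpanSingleton S M m).restrictScalars R)
    calc ∑ i, e i ⊗ₜ[R] ψ (f i • s • m) = Φ (∑ i, e i ⊗ₜ[R] (f i * s)) := by simp [Φ, mul_smul]
      _ = Φ (∑ i, (s * e i) ⊗ₜ[R] f i) := by rw [sum_mul_tmul_eq_sum_tmul_mul b hdual]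
      _ = s • ∑ i, e i ⊗ₜ[R] ψ (f i • m) := by
        simp [Φ, Finset.smul_sum, TensorProduct.smul_tmul']

theorem counit_sum_tmul (ψ : M →ₗ[R] N) (m : M) :
    counit lam N (∑ i, e i ⊗ₜ[R] ψ (f i • m)) = ψ m := by
  have h1 : ∑ i, lam (e i) • f i = 1 := by simpa using sum_lam_mul_smul b hdual 1
  conv_rhs => rw [← one_smul S m, ← h1, Finset.sum_smul]
  simp [smul_assoc]

theorem sum_tmul_counit_smul (t : S ⊗[R] N) : ∑ i, e i ⊗ₜ[R] counit lam N (f i • t) = t := by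
  induction t using TensorProduct.induction_on with
  | zero => simp
  | tmul s x =>
    simp only [TensorProduct.smul_tmul', smul_eq_mul, counit_tmul, TensorProduct.tmul_smul]
    rw [← TensorProduct.sum_tmul, sum_lam_mul_smul' b hdual]
  | add t t' ht ht' =>
    simp only [smul_add, map_add, TensorProduct.tmul_add, Finset.sum_add_distrib, ht, ht']

end FrobeniusExtension

open FrobeniusExtension in
theorem stmt16_general {R S : Type*} [CommRing R] [CommRing S] [Algebra R S]
    {n : ℕ} (b : Module.Basis (Fin n) R S) (lam : S →ₗ[R] R)
    (e f : Fin n → S)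
    (hdual : ∀ i j, lam (e i * f j) = if i = j then (1 : R) else 0)
    (M N : Type*) [AddCommGroup M] [Module R M] [Module S M] [IsScalarTower R S M]
    [AddCommGroup N] [Module R N] :
    (∀ ψ : M →ₗ[R] N, ∃ g : M →ₗ[S] (S ⊗[R] N),
        ∀ m : M, g m = ∑ i, (e i) ⊗ₜ[R] (ψ (f i • m))) ∧
    (∀ g : M →ₗ[S] (S ⊗[R] N), ∃! ψ : M →ₗ[R] N,
        ∀ m : M, g m = ∑ i, (e i) ⊗ₜ[R] (ψ (f i • m))) ∧
    (∑ i, (e i) ⊗ₜ[R] (f i * (1 : S)) = ∑ i, (e i) ⊗ₜ[R] (f i)) := by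
  refine ⟨exists_linearMap_eq_sum_tmul b hdual, fun g => ?_, by simp_rw [mul_one]⟩
  refine ⟨counit lam N ∘ₗ g.restrictScalars R, fun m => ?_, fun ψ hψ => ?_⟩
  · simpa using (sum_tmul_counit_smul b hdual (g m)).symm
  · ext m
    simp [hψ, counit_sum_tmul b hdual]

/-- **(Frobenius adjunction.)** Let `R → S` be relative Frobenius of rank `n`
(`S` free of rank `n` over `R`, with `λ` generating `Hom_R(S,R)` as `S`-module and dual bases
`(e_i)`, `(f_i)` satisfying `λ(e_i f_j) = δ_{ij}`).  For an `S`-module `M` and an `R`-module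
`N`, the map `φ₁ : Hom_R(M, N) → Hom_S(M, S ⊗_R N)`, `ψ ↦ (m ↦ Σ_i e_i ⊗ ψ(f_i • m))`,
is a well-defined bijection, exhibiting restriction of scalars as left adjoint to induction
`(−) ⊗_R S`; its value on the identity of `S` (taking `M = N = S`, `ψ = id`) sends
`1 ↦ Σ_i e_i ⊗ f_i`. -/
theorem stmt16 {R S : Type*} [CommRing R] [CommRing S] [Algebra R S]
    {n : ℕ} (b : Module.Basis (Fin n) R S) (lam : S →ₗ[R] R)
    (hgen : ∀ φ : S →ₗ[R] R, ∃! s : S, ∀ x : S, φ x = lam (s * x))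
    (e f : Fin n → S)
    (hdual : ∀ i j, lam (e i * f j) = if i = j then (1 : R) else 0)
    (M N : Type*) [AddCommGroup M] [Module R M] [Module S M] [IsScalarTower R S M]
    [AddCommGroup N] [Module R N] :
    (∀ ψ : M →ₗ[R] N, ∃ g : M →ₗ[S] (S ⊗[R] N),
        ∀ m : M, g m = ∑ i, (e i) ⊗ₜ[R] (ψ (f i • m))) ∧
    (∀ g : M →ₗ[S] (S ⊗[R] N), ∃! ψ : M →ₗ[R] N,
        ∀ m : M, g m = ∑ i, (e i) ⊗ₜ[R] (ψ (f i • m))) ∧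
    (∑ i, (e i) ⊗ₜ[R] (f i * (1 : S)) = ∑ i, (e i) ⊗ₜ[R] (f i)) :=
  stmt16_general b lam e f hdual M N
end
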